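/- arXiv:1609.08054 — 2 statements merged into one kernel-verified Lean document; each statement's English description precedes it below -/
import Mathlib

section
/- If N is a strongly 2-absorbing second submodule of M and K is a submodule of M with N ⊄ K, then (K :_R N) is a 2-absorbing ideal of R. -/
open Pointwise

/-- A nonzero submodule `N` is strongly 2-absorbing second (ideal form): for all
ideals `I J` of `R` and submodules `K` of `M` with `I • J • N ⊆ K`, either
`I • N ⊆ K` or `J • N ⊆ K` or `I * J ⊆ Ann(N)`. -/
def IsStrongly2AbsorbingSecond {R M : Type*} [CommRing R] [AddCommGroup M] [Module R M]
    (N : Submodule R M) : Prop :=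
  N ≠ ⊥ ∧ ∀ (I J : Ideal R) (K : Submodule R M), I • J • N ≤ K →
    I • N ≤ K ∨ J • N ≤ K ∨ I * J ≤ N.annihilator

/-- A proper ideal `I` is 2-absorbing if `a*b*c ∈ I` implies `a*b ∈ I` or `a*c ∈ I`
or `b*c ∈ I`. -/
def Is2AbsorbingIdeal {R : Type*} [CommRing R] (I : Ideal R) : Prop :=
  I ≠ ⊤ ∧ ∀ a b c : R, a * b * c ∈ I → a * b ∈ I ∨ a * c ∈ I ∨ b * c ∈ I

/-! For `a * b * c ∈ (K : N)`, pass to the submodule `K' = {m | c • m ∈ K}`: then `(K' : N)` consists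
of the `r` with `r * c ∈ (K : N)`, so `a * b ∈ (K' : N)`, and the strongly 2-absorbing property of `N`
applied to the principal ideals `(a)`, `(b)` and to `K'` yields `a * c`, `b * c` or `a * b` in `(K : N)`. -/

namespace Submodule

variable {R M : Type*} [CommRing R] [AddCommGroup M] [Module R M]

theorem annihilator_le_colon (N K : Submodule R M) : N.annihilator ≤ K.colon N :=
  bot_colon (N := N) ▸ colon_mono bot_le le_rfl

theorem mem_colon_comap_smul_iff {N K : Submodule R M} {r c : R} :
    r ∈ (K.comap (c • LinearMap.id)).colon N ↔ r * c ∈ K.colon N := by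
  simp only [mem_colon, mem_comap, LinearMap.smul_apply, LinearMap.id_apply, smul_smul, mul_comm]

end Submodule

open Submodule

theorem IsStrongly2AbsorbingSecond.mem_colon_or_mem_colon_or_mul_mem_annihilator
    {R M : Type*} [CommRing R] [AddCommGroup M] [Module R M] {N : Submodule R M}
    (hN : IsStrongly2AbsorbingSecond N) {K : Submodule R M} {a b : R}
    (hab : a * b ∈ K.colon N) :
    a ∈ K.colon N ∨ b ∈ K.colon N ∨ a * b ∈ N.annihilator := by
  have h := hN.2 (Ideal.span {a}) (Ideal.span {b}) K
  simp only [ideal_span_singleton_smul, Ideal.span_singleton_mul_span_singleton,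
    Ideal.span_singleton_le_iff_mem, ← mul_smul, ← mem_colon_iff_le] at h
  exact h hab

theorem colon_2absorbing_of_strongly2AbsorbingSecond
    {R M : Type*} [CommRing R] [AddCommGroup M] [Module R M]
    (N : Submodule R M) (hN : IsStrongly2AbsorbingSecond N)
    (K : Submodule R M) (hNK : ¬ N ≤ K) :
    Is2AbsorbingIdeal (K.colon N) := by
  refine ⟨fun h => hNK ((colon_eq_top_iff_subset _).1 h), fun a b c habc => ?_⟩
  rcases hN.mem_colon_or_mem_colon_or_mul_mem_annihilator
      (K := K.comap (c • LinearMap.id)) (mem_colon_comap_smul_iff.2 habc) with ha | hb | hab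
  · exact Or.inr (Or.inl (mem_colon_comap_smul_iff.1 ha))
  · exact Or.inr (Or.inr (mem_colon_comap_smul_iff.1 hb))
  · exact Or.inl (annihilator_le_colon N K hab)
end

section
/- If N is a strongly 2-absorbing second submodule of M and I is an ideal of R, then Iⁿ•N = Iⁿ⁺¹•N for all n ≥ 2. -/
open Pointwise

/-! Taking `J = I` and `K = I • I • N` in the definition leaves two cases. If `I • N ≤ I² • N`, the
chain `I • N ⊇ I² • N ⊇ ⋯` is constant from the start. Otherwise `I²` annihilates `N`, and then
`Iⁿ • N = 0` for every `n ≥ 2`. -/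

namespace Submodule

variable {R M : Type*} [CommRing R] [AddCommGroup M] [Module R M] {I : Ideal R} {N : Submodule R M}

theorem pow_smul_eq_pow_succ_smul_of_smul_le (h : I • N ≤ I • I • N) {n : ℕ} (hn : 1 ≤ n) :
    I ^ n • N = I ^ (n + 1) • N := by
  obtain ⟨m, rfl⟩ := Nat.exists_eq_add_of_le' hn
  have hI : I • N = I • I • N := le_antisymm h smul_le_right
  calc I ^ (m + 1) • N = I ^ m • I • N := by rw [pow_succ, mul_smul]
    _ = I ^ m • I • I • N := congrArg (I ^ m • ·) hI
    _ = I ^ (m + 1 + 1) • N := by rw [pow_succ, pow_succ, mul_smul, mul_smul]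

theorem pow_smul_eq_bot_of_sq_le_annihilator (h : I ^ 2 ≤ N.annihilator) {n : ℕ} (hn : 2 ≤ n) :
    I ^ n • N = ⊥ :=
  le_annihilator_iff.mp ((Ideal.pow_le_pow_right hn).trans h)

end Submodule

open Submodule

theorem IsStrongly2AbsorbingSecond.smul_le_smul_smul_or_sq_le_annihilator
    {R M : Type*} [CommRing R] [AddCommGroup M] [Module R M] {N : Submodule R M}
    (hN : IsStrongly2AbsorbingSecond N) (I : Ideal R) :
    I • N ≤ I • I • N ∨ I ^ 2 ≤ N.annihilator := by
  rcases hN.2 I I (I • I • N) le_rfl with h | h | h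
  · exact .inl h
  · exact .inl h
  · exact .inr (sq I ▸ h)

theorem ideal_pow_smul_stabilizes
    {R M : Type*} [CommRing R] [AddCommGroup M] [Module R M]
    (N : Submodule R M) (hN : IsStrongly2AbsorbingSecond N) (I : Ideal R) :
    ∀ n : ℕ, 2 ≤ n → I ^ n • N = I ^ (n + 1) • N := by
  intro n hn
  rcases hN.smul_le_smul_smul_or_sq_le_annihilator I with h | h
  · exact pow_smul_eq_pow_succ_smul_of_smul_le h (by omega)
  · rw [pow_smul_eq_bot_of_sq_le_annihilator h hn,
      pow_smul_eq_bot_of_sq_le_annihilator h (by omega)]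
end
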